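/- In the code-generation model with f = f^T, g1 = g1^T, g0 = g0^T, let C be a coalition of size c ≥ 1 and let y be the extremal strategy y_i = 1 if and only if Σ_{j∈C} X_{ji} ≥ 1 (output a 1 whenever the marking condition allows it). Then for every user j ∉ C: E[S_j] = 0 and Var(S_j) = m·(1 − (1/(π − 4t'))·∫_t^{1−t} p^{−1/2}·(1−p)^{c−1/2} dp). -/

import Mathlib

open MeasureTheory ProbabilityTheory Real

noncomputable section

/-- Bernoulli measure on `Bool` with parameter `p`. -/
def bern (p : ℝ) : Measure Bool :=
  ENNReal.ofReal p • Measure.dirac true + ENNReal.ofReal (1 - p) • Measure.dirac false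

/-- The measure on `ℝ` with density `f` (w.r.t. Lebesgue measure). -/
def biasMeasure (f : ℝ → ℝ) : Measure ℝ :=
  MeasureTheory.volume.withDensity fun p => ENNReal.ofReal (f p)

/-- Joint law of the biases `p = (p_1,…,p_m)` (i.i.d. with density `f`) together with the
code matrix `X` whose entries `X j i` are, conditionally on `p`, independent
Bernoulli(`p i`). -/
def codeMeasure (n m : ℕ) (f : ℝ → ℝ) :
    Measure ((Fin m → ℝ) × (Fin n → Fin m → Bool)) :=
  (Measure.pi fun _ : Fin m => biasMeasure f).bind fun p =>
    (Measure.dirac p).prod (Measure.pi fun _ : Fin n => Measure.pi fun i : Fin m => bern (p i))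

/-- The accusation sum `S_j = Σ_i y_i · (g1 (p_i) if X_{ji} = 1, g0 (p_i) if X_{ji} = 0)`. -/
def accusation (m : ℕ) (g1 g0 : ℝ → ℝ) (p : Fin m → ℝ) (x : Fin m → Bool)
    (y : Fin m → Bool) : ℝ :=
  ∑ i, if y i then (if x i then g1 (p i) else g0 (p i)) else 0

def tprime (t : ℝ) : ℝ := Real.arcsin (Real.sqrt t)

/-- Tardos' bias density (extended by `0` outside `[t, 1-t]`). -/
def fT (t : ℝ) (p : ℝ) : ℝ :=
  if p ∈ Set.Icc t (1 - t) then 1 / ((π - 4 * tprime t) * Real.sqrt (p * (1 - p))) else 0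

/-- Tardos' accusation function `g1`. -/
def g1T (p : ℝ) : ℝ := Real.sqrt ((1 - p) / p)

/-- Tardos' accusation function `g0`. -/
def g0T (p : ℝ) : ℝ := - Real.sqrt (p / (1 - p))

/-!
Conditionally on the biases `p`, the rows of the code matrix are independent, so the row of an
innocent user `j ∉ C` is independent of the coalition's rows and hence of any strategy `y` they
compute. Under `Bernoulli(p)` Tardos' score has mean `0` and second moment `1`, so
`E[S_j | p] = 0`, and in `E[S_j² | p]` the off-diagonal terms vanish, leaving
`Σ_i P(y_i = 1 | p)`, which is `Σ_i (1 - (1 - p_i)^c)` for the extremal strategy. Integrating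
against `f^T`, whose normalisation is `∫_t^{1-t} dp / √(p(1-p)) = π - 4t'` (an antiderivative is
`2 arcsin √p`), gives the variance formula.
-/

section ProductMeasure

variable {ι : Type*} [Fintype ι] {β : ι → Type*} [∀ i, MeasurableSpace (β i)]

lemma measurable_measure_pi {α : Type*} [MeasurableSpace α] {μ : ∀ i, α → Measure (β i)}
    [∀ i a, IsProbabilityMeasure (μ i a)] (hμ : ∀ i, Measurable (μ i)) :
    Measurable fun a => Measure.pi fun i => μ i a := by
  refine .measure_of_isPiSystem_of_isProbabilityMeasure generateFrom_pi.symm isPiSystem_pi ?_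
  rintro _ ⟨s, hs, rfl⟩
  simp_rw [Measure.pi_pi]
  exact Finset.measurable_prod _ fun i _ => Measure.measurable_coe (hs i trivial) |>.comp (hμ i)

variable {μ : ∀ i, Measure (β i)} [∀ i, IsProbabilityMeasure (μ i)]

lemma iIndepFun_eval : iIndepFun (fun i (x : ∀ i, β i) => x i) (Measure.pi μ) :=
  iIndepFun_pi fun _ => aemeasurable_id

lemma integral_comp_eval_mul_eq_of_notMem {C : Finset ι} {j : ι} (hj : j ∉ C)
    {A : β j → ℝ} {B : (∀ k : C, β k) → ℝ} (hA : Measurable A) (hB : Measurable B) :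
    ∫ x, A (x j) * B (fun k => x k) ∂Measure.pi μ
      = (∫ b, A b ∂μ j) * ∫ x, B (fun k => x k) ∂Measure.pi μ := by
  classical
  have hind := (iIndepFun_eval (μ := μ)).indepFun_finset {j} C
    (Finset.disjoint_singleton_left.2 hj) fun i => measurable_pi_apply i
  have hA' : Measurable fun z : ∀ k : ({j} : Finset ι), β k =>
      A (z ⟨j, Finset.mem_singleton_self j⟩) :=
    hA.comp (measurable_pi_apply _)
  rw [← integral_comp_eval hA.aestronglyMeasurable]
  exact (hind.comp hA' hB).integral_fun_mul_eq_mul_integral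
    (hA'.comp (measurable_pi_lambda _ fun _ => measurable_pi_apply _)).aestronglyMeasurable
    (hB.comp (measurable_pi_lambda _ fun _ => measurable_pi_apply _)).aestronglyMeasurable

lemma integral_comp_eval_mul_comp_eval_of_ne {i i' : ι} (hii' : i ≠ i')
    {f : β i → ℝ} {g : β i' → ℝ} (hf : Measurable f) (hg : Measurable g) :
    ∫ x, f (x i) * g (x i') ∂Measure.pi μ = (∫ b, f b ∂μ i) * ∫ b, g b ∂μ i' := by
  rw [← integral_comp_eval hf.aestronglyMeasurable,
    ← integral_comp_eval hg.aestronglyMeasurable]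
  exact (((iIndepFun_eval (μ := μ)).indepFun hii').comp hf hg).integral_fun_mul_eq_mul_integral
    (hf.comp (measurable_pi_apply i)).aestronglyMeasurable
    (hg.comp (measurable_pi_apply i')).aestronglyMeasurable

end ProductMeasure

section ProductMeasureHomogeneous

variable {ι α : Type*} [Fintype ι] [MeasurableSpace α]

lemma integral_comp_eval_mul_comp_eval_eq_ite [DecidableEq ι] {ν : ι → Measure α}
    [∀ i, IsProbabilityMeasure (ν i)] {s : ι → α → ℝ} (hs : ∀ i, Measurable (s i))
    (hmean : ∀ i, ∫ b, s i b ∂ν i = 0) (hsq : ∀ i, ∫ b, s i b ^ 2 ∂ν i = 1) (i i' : ι) :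
    ∫ x, s i (x i) * s i' (x i') ∂Measure.pi ν = if i = i' then 1 else 0 := by
  split_ifs with hii'
  · subst hii'
    simp_rw [← sq]
    exact (integral_comp_eval (μ := ν) (f := fun b => s i b ^ 2)
      ((hs i).pow_const 2).aestronglyMeasurable).trans (hsq i)
  · rw [integral_comp_eval_mul_comp_eval_of_ne hii' (hs i) (hs i'), hmean, zero_mul]

lemma ae_pi_forall_of_ae {μ : Measure α} [SigmaFinite μ] {P : α → Prop} (h : ∀ᵐ a ∂μ, P a) :
    ∀ᵐ x ∂Measure.pi fun _ : ι => μ, ∀ i, P (x i) :=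
  ae_all_iff.2 fun i => (Measure.quasiMeasurePreserving_eval _ i).ae h

end ProductMeasureHomogeneous

section InnocentScore

variable {ι : Type*} [Fintype ι] {m : ℕ} {ν : Fin m → Measure Bool}
  [∀ i, IsProbabilityMeasure (ν i)] {g1 g0 : ℝ → ℝ} {p : Fin m → ℝ} {C : Finset ι} {j : ι}

variable (ν) in
abbrev rowsMeasure (ι : Type*) [Fintype ι] : Measure (ι → Fin m → Bool) :=
  Measure.pi fun _ : ι => Measure.pi ν

lemma integral_accusation_of_notMem (hj : j ∉ C) (Y : (C → Fin m → Bool) → Fin m → Bool)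
    (hmean : ∀ i, ∫ b, (if b then g1 (p i) else g0 (p i)) ∂ν i = 0) :
    ∫ x, accusation m g1 g0 p (x j) (Y fun k => x k) ∂rowsMeasure ν ι = 0 := by
  unfold accusation
  rw [integral_finsetSum _ fun _ _ => Integrable.of_finite]
  refine Finset.sum_eq_zero fun i _ => ?_
  have hsplit : ∀ x : ι → Fin m → Bool,
      (if Y (fun k => x k) i then (if x j i then g1 (p i) else g0 (p i)) else 0)
        = (if x j i then g1 (p i) else g0 (p i)) * (if Y (fun k => x k) i then 1 else 0) := by
    intro x; split_ifs <;> simp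
  simp_rw [hsplit]
  rw [integral_comp_eval_mul_eq_of_notMem (μ := fun _ => Measure.pi ν) hj
      (A := fun r => if r i then g1 (p i) else g0 (p i)) (B := fun z => if Y z i then 1 else 0)
      Measurable.of_discrete Measurable.of_discrete,
    integral_comp_eval (μ := ν) (f := fun b => if b then g1 (p i) else g0 (p i))
      Measurable.of_discrete.aestronglyMeasurable, hmean, zero_mul]

lemma integral_accusation_sq_of_notMem (hj : j ∉ C) (Y : (C → Fin m → Bool) → Fin m → Bool)
    (hmean : ∀ i, ∫ b, (if b then g1 (p i) else g0 (p i)) ∂ν i = 0)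
    (hsq : ∀ i, ∫ b, (if b then g1 (p i) else g0 (p i)) ^ 2 ∂ν i = 1) :
    ∫ x, accusation m g1 g0 p (x j) (Y fun k => x k) ^ 2 ∂rowsMeasure ν ι
      = ∑ i, ∫ x, (if Y (fun k => x k) i then 1 else 0) ∂rowsMeasure ν ι := by
  set s : Fin m → Bool → ℝ := fun i b => if b then g1 (p i) else g0 (p i)
  set w : (C → Fin m → Bool) → Fin m → ℝ := fun z i => if Y z i then 1 else 0
  have hexpand : ∀ x : ι → Fin m → Bool, accusation m g1 g0 p (x j) (Y fun k => x k) ^ 2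
      = ∑ i, ∑ i', s i (x j i) * s i' (x j i') * (w (fun k => x k) i * w (fun k => x k) i') := by
    intro x
    simp only [accusation, sq, Finset.sum_mul_sum]
    refine Finset.sum_congr rfl fun i _ => Finset.sum_congr rfl fun i' _ => ?_
    simp only [s, w]
    split_ifs <;> simp
  simp_rw [hexpand]
  rw [integral_finsetSum _ fun _ _ => Integrable.of_finite]
  refine Finset.sum_congr rfl fun i _ => ?_
  rw [integral_finsetSum _ fun _ _ => Integrable.of_finite]
  rw [Finset.sum_congr rfl fun i' _ => integral_comp_eval_mul_eq_of_notMem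
    (μ := fun _ => Measure.pi ν) hj (B := fun z => w z i * w z i')
    (A := fun r => s i (r i) * s i' (r i')) Measurable.of_discrete Measurable.of_discrete]
  simp_rw [integral_comp_eval_mul_comp_eval_eq_ite (s := s) (fun _ => Measurable.of_discrete)
    hmean hsq]
  simp only [ite_mul, one_mul, zero_mul, Finset.sum_ite_eq, Finset.mem_univ, if_true, w]
  congr 1 with x
  split_ifs <;> simp

def extremalStrategy (C : Finset ι) (z : C → Fin m → Bool) : Fin m → Bool :=
  fun i => Finset.univ.sup fun k => z k i

omit [Fintype ι] in
lemma extremalStrategy_restrict (x : ι → Fin m → Bool) :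
    extremalStrategy C (fun k => x k) = fun i => C.sup fun k => x k i := by
  ext i
  exact Finset.sup_attach C fun k => x k i

omit [Fintype ι] in
lemma prod_ite_eq_ite_sup (f : ι → Bool) :
    ∏ k ∈ C, (if f k then (0 : ℝ) else 1) = if C.sup f then 0 else 1 := by
  by_cases h : ∀ k ∈ C, f k = false
  · rw [Finset.prod_eq_one fun k hk => by simp [h k hk], (Finset.sup_eq_bot_iff f C).2 h]
    rfl
  · push Not at h
    obtain ⟨k, hk, hfk⟩ := h
    rw [ne_eq, Bool.not_eq_false] at hfk
    have hsup : C.sup f = true := by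
      have := Finset.le_sup (f := f) hk
      rw [hfk] at this
      exact top_le_iff.1 this
    rw [Finset.prod_eq_zero hk (by simp [hfk]), hsup]
    rfl

lemma integral_ite_sup_eq_one_sub_pow (i : Fin m) :
    ∫ x, (if C.sup (fun k => x k i) then 1 else 0) ∂rowsMeasure ν ι
      = 1 - (ν i).real {false} ^ C.card := by
  classical
  have hpt : ∀ x : ι → Fin m → Bool, (if C.sup (fun k => x k i) then (1 : ℝ) else 0)
      = 1 - ∏ k, if k ∈ C then (if x k i then 0 else 1) else 1 := by
    intro x
    rw [Finset.prod_ite_mem, Finset.univ_inter, prod_ite_eq_ite_sup]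
    split_ifs <;> norm_num
  simp_rw [hpt]
  unfold rowsMeasure
  rw [integral_sub (integrable_const _) Integrable.of_finite, integral_const, probReal_univ,
    one_smul,
    integral_fintype_prod_eq_prod (E := fun _ => Fin m → Bool)
      (f := fun k r => if k ∈ C then (if r i then (0:ℝ) else 1) else 1)]
  have hfalse : ∫ r, (if r i then (0 : ℝ) else 1) ∂Measure.pi ν = (ν i).real {false} := by
    rw [integral_comp_eval (μ := ν) (f := fun b => if b then (0 : ℝ) else 1)
      Measurable.of_discrete.aestronglyMeasurable]
    simp [integral_fintype]
  rw [Finset.prod_congr rfl fun k _ => show _ = if k ∈ C then (ν i).real {false} else 1 by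
    split_ifs <;> simp [hfalse], Finset.prod_ite_mem, Finset.univ_inter, Finset.prod_const]

end InnocentScore

section Bernoulli

variable {r : ℝ}

lemma isProbabilityMeasure_bern (hr : r ∈ Set.Icc 0 1) : IsProbabilityMeasure (bern r) :=
  ⟨by simp [bern, ← ENNReal.ofReal_add hr.1 (sub_nonneg.2 hr.2)]⟩

lemma integral_bern (hr : r ∈ Set.Icc 0 1) (h : Bool → ℝ) :
    ∫ b, h b ∂bern r = r * h true + (1 - r) * h false := by
  have := isProbabilityMeasure_bern hr
  rw [integral_fintype Integrable.of_finite]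
  simp [measureReal_def, bern, hr.1, hr.2]

lemma measurable_bern : Measurable bern :=
  (ENNReal.measurable_ofReal.smul_measure _).add
    ((ENNReal.measurable_ofReal.comp (measurable_const.sub measurable_id)).smul_measure _)

-- `bern r` is not a probability measure for `r ∉ [0, 1]`, hence the clipping.
def bernKernel : Kernel ℝ Bool :=
  ⟨fun r => bern (Set.projIcc 0 1 zero_le_one r), measurable_bern.comp
    (continuous_subtype_val.comp (continuous_projIcc (h := zero_le_one))).measurable⟩

instance : IsMarkovKernel bernKernel :=
  ⟨fun r => isProbabilityMeasure_bern (Set.projIcc 0 1 zero_le_one r).2⟩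

lemma bernKernel_apply (hr : r ∈ Set.Icc 0 1) : bernKernel r = bern r := by
  change bern _ = _
  rw [Set.projIcc_of_mem _ hr]

end Bernoulli

def codeKernel (n m : ℕ) : Kernel (Fin m → ℝ) (Fin n → Fin m → Bool) :=
  ⟨fun p => rowsMeasure (fun i => bernKernel (p i)) (Fin n),
    measurable_measure_pi fun _ => measurable_measure_pi fun i =>
      bernKernel.measurable.comp (measurable_pi_apply i)⟩

instance (n m : ℕ) : IsMarkovKernel (codeKernel n m) :=
  ⟨fun p => inferInstanceAs (IsProbabilityMeasure (rowsMeasure (fun i => bernKernel (p i)) _))⟩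

lemma codeMeasure_eq_compProd (n m : ℕ) {f : ℝ → ℝ} [SigmaFinite (biasMeasure f)]
    (hf : ∀ᵐ r ∂biasMeasure f, r ∈ Set.Icc 0 1) :
    codeMeasure n m f = (Measure.pi fun _ : Fin m => biasMeasure f) ⊗ₘ codeKernel n m := by
  rw [Measure.compProd_eq_comp_prod, codeMeasure]
  refine Measure.bind_congr_right ?_
  filter_upwards [ae_pi_forall_of_ae hf] with p hp
  simp only [Kernel.prod_apply, Kernel.id_apply]
  change _ = (Measure.dirac p).prod (rowsMeasure (fun i => bernKernel (p i)) _)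
  simp_rw [bernKernel_apply (hp _)]

section TardosDensity

variable {t : ℝ}

lemma Icc_subset_Ioo_zero_one (ht : t ∈ Set.Ioo 0 (1 / 2)) :
    Set.Icc t (1 - t) ⊆ Set.Ioo 0 1 :=
  fun r hr => ⟨ht.1.trans_le hr.1, by linarith [hr.2, ht.1]⟩

lemma tprime_lt_pi_div_four (ht : t ∈ Set.Ioo 0 (1 / 2)) : tprime t < π / 4 := by
  have hsqrt : √t ∈ Set.Icc (-1) 1 :=
    ⟨by linarith [Real.sqrt_nonneg t], Real.sqrt_le_one.2 (by linarith [ht.2])⟩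
  rw [tprime, Real.arcsin_lt_iff_lt_sin hsqrt ⟨by linarith [pi_pos], by linarith [pi_pos]⟩,
    Real.sin_pi_div_four, Real.sqrt_lt' (by positivity), div_pow, Real.sq_sqrt zero_le_two]
  linarith [ht.2]

lemma pi_sub_four_mul_tprime_pos (ht : t ∈ Set.Ioo 0 (1 / 2)) : 0 < π - 4 * tprime t := by
  linarith [tprime_lt_pi_div_four ht]

lemma arcsin_sqrt_one_sub (ht : 0 ≤ t) : arcsin √(1 - t) = π / 2 - arcsin √t := by
  rw [← Real.arccos_eq_pi_div_two_sub_arcsin, Real.arccos_eq_arcsin (Real.sqrt_nonneg _),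
    Real.sq_sqrt ht]

lemma hasDerivAt_two_mul_arcsin_sqrt {p : ℝ} (hp : p ∈ Set.Ioo 0 1) :
    HasDerivAt (fun p => 2 * arcsin √p) (1 / √(p * (1 - p))) p := by
  have hsqrt_pos : 0 < √p := Real.sqrt_pos.2 hp.1
  have hsqrt_lt : √p < 1 := (Real.sqrt_lt' one_pos).2 (by simpa using hp.2)
  refine (((Real.hasDerivAt_arcsin (by linarith) hsqrt_lt.ne).comp p
    (Real.hasDerivAt_sqrt hp.1.ne')).const_mul 2).congr_deriv ?_
  have : 0 < √(1 - p) := Real.sqrt_pos.2 (sub_pos.2 hp.2)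
  rw [Real.sq_sqrt hp.1.le, Real.sqrt_mul hp.1.le]
  field_simp

lemma continuousOn_one_div_sqrt_mul_one_sub (ht : t ∈ Set.Ioo 0 (1 / 2)) :
    ContinuousOn (fun p => 1 / √(p * (1 - p))) (Set.Icc t (1 - t)) := by
  refine fun p hp => ContinuousAt.continuousWithinAt ?_
  have hpos : 0 < p * (1 - p) := mul_pos (ht.1.trans_le hp.1) (by linarith [hp.2, ht.1])
  fun_prop (disch := exact (Real.sqrt_pos.2 hpos).ne')

lemma integral_one_div_sqrt_mul_one_sub (ht : t ∈ Set.Ioo 0 (1 / 2)) :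
    ∫ p in Set.Icc t (1 - t), 1 / √(p * (1 - p)) = π - 4 * tprime t := by
  have hle : t ≤ 1 - t := by linarith [ht.2]
  have hmem : ∀ p ∈ Set.uIcc t (1 - t), p ∈ Set.Ioo 0 1 := fun p hp => by
    rw [Set.uIcc_of_le hle] at hp
    exact ⟨ht.1.trans_le hp.1, by linarith [hp.2, ht.1]⟩
  rw [integral_Icc_eq_integral_Ioc, ← intervalIntegral.integral_of_le hle,
    intervalIntegral.integral_eq_sub_of_hasDerivAt
      (fun p hp => hasDerivAt_two_mul_arcsin_sqrt (hmem p hp))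
      ((Set.uIcc_of_le hle).symm ▸ continuousOn_one_div_sqrt_mul_one_sub ht).intervalIntegrable,
    arcsin_sqrt_one_sub ht.1.le, tprime]
  ring

lemma fT_eq_indicator (t : ℝ) :
    fT t = (Set.Icc t (1 - t)).indicator fun p => (π - 4 * tprime t)⁻¹ * (1 / √(p * (1 - p))) := by
  ext p
  by_cases hp : p ∈ Set.Icc t (1 - t)
  · simp [fT, hp, mul_comm]
  · simp [fT, hp]

lemma measurable_fT (t : ℝ) : Measurable (fT t) := by
  rw [fT_eq_indicator]
  exact (by fun_prop : Measurable _).indicator measurableSet_Icc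

lemma fT_nonneg (ht : t ∈ Set.Ioo 0 (1 / 2)) (p : ℝ) : 0 ≤ fT t p := by
  rw [fT_eq_indicator]
  exact Set.indicator_nonneg (fun p _ => by
    have := (pi_sub_four_mul_tprime_pos ht).le; positivity) p

lemma integral_fT (ht : t ∈ Set.Ioo 0 (1 / 2)) : ∫ p, fT t p = 1 := by
  rw [fT_eq_indicator, integral_indicator measurableSet_Icc, integral_const_mul,
    integral_one_div_sqrt_mul_one_sub ht, inv_mul_cancel₀ (pi_sub_four_mul_tprime_pos ht).ne']

lemma integrable_fT (ht : t ∈ Set.Ioo 0 (1 / 2)) : Integrable (fT t) := by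
  rw [fT_eq_indicator]
  exact IntegrableOn.integrable_indicator
    ((continuousOn_one_div_sqrt_mul_one_sub ht).integrableOn_Icc.const_mul _) measurableSet_Icc

lemma isProbabilityMeasure_biasMeasure_fT (ht : t ∈ Set.Ioo 0 (1 / 2)) :
    IsProbabilityMeasure (biasMeasure (fT t)) :=
  ⟨by rw [biasMeasure, withDensity_apply _ MeasurableSet.univ, Measure.restrict_univ,
    ← ofReal_integral_eq_lintegral_ofReal (integrable_fT ht) (.of_forall (fT_nonneg ht)),
    integral_fT ht, ENNReal.ofReal_one]⟩

lemma ae_mem_Icc_biasMeasure_fT (t : ℝ) : ∀ᵐ r ∂biasMeasure (fT t), r ∈ Set.Icc t (1 - t) := by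
  rw [ae_iff, biasMeasure, withDensity_apply_eq_zero' (measurable_fT t).ennreal_ofReal.aemeasurable]
  refine measure_mono_null (fun p ⟨hfT, hp⟩ => hfT ?_) measure_empty
  simp [fT, show p ∉ Set.Icc t (1 - t) from hp]

lemma integral_biasMeasure_fT (ht : t ∈ Set.Ioo 0 (1 / 2)) (g : ℝ → ℝ) :
    ∫ r, g r ∂biasMeasure (fT t)
      = (π - 4 * tprime t)⁻¹ * ∫ p in Set.Icc t (1 - t), g p / √(p * (1 - p)) := by
  rw [biasMeasure, integral_withDensity_eq_integral_toReal_smul (measurable_fT t).ennreal_ofReal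
    (.of_forall fun _ => ENNReal.ofReal_lt_top)]
  simp_rw [ENNReal.toReal_ofReal (fT_nonneg ht _), smul_eq_mul]
  rw [← integral_const_mul, ← integral_indicator measurableSet_Icc]
  congr 1 with p
  by_cases hp : p ∈ Set.Icc t (1 - t)
  · simp only [fT, hp, if_true, Set.indicator_of_mem, mul_inv, div_eq_mul_inv]
    ring
  · simp [fT, hp]

lemma integral_one_sub_pow_biasMeasure_fT (ht : t ∈ Set.Ioo 0 (1 / 2)) (c : ℕ) :
    ∫ r, (1 - r) ^ c ∂biasMeasure (fT t) = (π - 4 * tprime t)⁻¹ *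
      ∫ p in Set.Icc t (1 - t), p ^ (-(1 / 2) : ℝ) * (1 - p) ^ ((c : ℝ) - 1 / 2) := by
  rw [integral_biasMeasure_fT ht]
  congr 1
  refine setIntegral_congr_fun measurableSet_Icc fun p hp => ?_
  have hp0 : 0 < p := ht.1.trans_le hp.1
  have hp1 : 0 < 1 - p := by linarith [hp.2, ht.1]
  rw [Real.rpow_neg hp0.le, Real.rpow_sub hp1, Real.rpow_natCast, ← Real.sqrt_eq_rpow,
    ← Real.sqrt_eq_rpow, Real.sqrt_mul hp0.le]
  field_simp

lemma integral_sum_one_sub_one_sub_pow_biasMeasure_fT (ht : t ∈ Set.Ioo 0 (1 / 2))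
    (m c : ℕ) :
    ∫ a, ∑ i : Fin m, (1 - (1 - a i) ^ c) ∂Measure.pi (fun _ => biasMeasure (fT t))
      = m * (1 - (π - 4 * tprime t)⁻¹ *
        ∫ p in Set.Icc t (1 - t), p ^ (-(1 / 2) : ℝ) * (1 - p) ^ ((c : ℝ) - 1 / 2)) := by
  have := isProbabilityMeasure_biasMeasure_fT ht
  have hpow : Integrable (fun r => (1 - r) ^ c) (biasMeasure (fT t)) := by
    refine .of_bound (by fun_prop) 1 ((ae_mem_Icc_biasMeasure_fT t).mono fun r hr => ?_)
    have hr' := Icc_subset_Ioo_zero_one ht hr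
    rw [norm_pow, Real.norm_of_nonneg (by linarith [hr'.2])]
    exact pow_le_one₀ (by linarith [hr'.2]) (by linarith [hr'.1])
  rw [integral_finsetSum _ fun i _ => integrable_comp_eval (μ := fun _ => biasMeasure (fT t))
    (i := i) (f := fun r => 1 - (1 - r) ^ c) ((integrable_const 1).sub hpow)]
  simp_rw [integral_comp_eval (μ := fun _ => biasMeasure (fT t)) (f := fun r => 1 - (1 - r) ^ c)
    (by fun_prop), integral_sub (integrable_const 1) hpow, integral_one_sub_pow_biasMeasure_fT ht]
  simp only [integral_const, probReal_univ, one_smul, Finset.sum_const, Finset.card_univ,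
    Fintype.card_fin, nsmul_eq_mul]

end TardosDensity

section TardosScore

variable {r : ℝ}

lemma integral_tardosScore_bern (hr : r ∈ Set.Ioo 0 1) :
    ∫ b, (if b then g1T r else g0T r) ∂bern r = 0 := by
  have h1r : 0 < 1 - r := sub_pos.2 hr.2
  rw [integral_bern (Set.Ioo_subset_Icc_self hr)]
  simp only [if_true, Bool.false_eq_true, if_false, g1T, g0T]
  rw [Real.sqrt_div' _ hr.1.le, Real.sqrt_div' _ h1r.le]
  field_simp
  rw [Real.sq_sqrt h1r.le, Real.sq_sqrt hr.1.le]
  ring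

lemma integral_tardosScore_sq_bern (hr : r ∈ Set.Ioo 0 1) :
    ∫ b, (if b then g1T r else g0T r) ^ 2 ∂bern r = 1 := by
  have h1r : 0 < 1 - r := sub_pos.2 hr.2
  rw [integral_bern (Set.Ioo_subset_Icc_self hr)]
  simp only [if_true, Bool.false_eq_true, if_false, g1T, g0T, neg_sq,
    Real.sq_sqrt (div_nonneg h1r.le hr.1.le), Real.sq_sqrt (div_nonneg hr.1.le h1r.le)]
  field_simp [hr.1.ne']
  ring

lemma bern_real_false (hr : r ∈ Set.Icc 0 1) : (bern r).real {false} = 1 - r := by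
  simp [bern, measureReal_def, sub_nonneg.2 hr.2]

variable {t : ℝ}

lemma abs_g1T_le (ht : 0 < t) (hr : r ∈ Set.Icc t (1 - t)) : |g1T r| ≤ √((1 - t) / t) := by
  rw [g1T, abs_of_nonneg (Real.sqrt_nonneg _)]
  exact Real.sqrt_le_sqrt (div_le_div₀ (by linarith [hr.1, hr.2]) (by linarith [hr.1]) ht hr.1)

lemma abs_g0T_le (ht : 0 < t) (hr : r ∈ Set.Icc t (1 - t)) : |g0T r| ≤ √((1 - t) / t) := by
  rw [g0T, abs_neg, abs_of_nonneg (Real.sqrt_nonneg _)]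
  exact Real.sqrt_le_sqrt (div_le_div₀ (by linarith [hr.1, hr.2]) (by linarith [hr.2]) ht
    (by linarith [hr.2]))

end TardosScore

lemma abs_accusation_le {m : ℕ} {g1 g0 : ℝ → ℝ} {p : Fin m → ℝ} {M : ℝ} (hM : 0 ≤ M)
    (hg1 : ∀ i, |g1 (p i)| ≤ M) (hg0 : ∀ i, |g0 (p i)| ≤ M) (x y : Fin m → Bool) :
    |accusation m g1 g0 p x y| ≤ m * M := by
  calc |accusation m g1 g0 p x y|
      ≤ ∑ i, |if y i then (if x i then g1 (p i) else g0 (p i)) else 0| :=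
        Finset.abs_sum_le_sum_abs _ _
    _ ≤ ∑ _i : Fin m, M := Finset.sum_le_sum fun i _ => by
        split_ifs <;> simp [hg1 i, hg0 i, hM]
    _ = m * M := by simp

lemma measurable_accusation {m : ℕ} {g1 g0 : ℝ → ℝ} (hg1 : Measurable g1) (hg0 : Measurable g0)
    (x y : Fin m → Bool) : Measurable fun p => accusation m g1 g0 p x y :=
  Finset.measurable_sum _ fun i _ => by
    cases y i <;> cases x i <;> simp only [if_true, Bool.false_eq_true, if_false] <;> fun_prop

lemma measurable_g1T : Measurable g1T := by unfold g1T; fun_prop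

lemma measurable_g0T : Measurable g0T := by unfold g0T; fun_prop

lemma memLp_accusation_compProd {t : ℝ} (ht : t ∈ Set.Ioo 0 (1 / 2)) {n m : ℕ} (j : Fin n)
    (y : (Fin n → Fin m → Bool) → Fin m → Bool) :
    MemLp (fun q => accusation m g1T g0T q.1 (q.2 j) (y q.2)) 2
      ((Measure.pi fun _ : Fin m => biasMeasure (fT t)) ⊗ₘ codeKernel n m) := by
  have := isProbabilityMeasure_biasMeasure_fT ht
  refine .of_bound (measurable_from_prod_countable_left fun x =>
    measurable_accusation measurable_g1T measurable_g0T (x j) (y x)).aestronglyMeasurable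
    (m * √((1 - t) / t)) ((Measure.ae_compProd_of_ae_fst _ ?_
      (ae_pi_forall_of_ae (ae_mem_Icc_biasMeasure_fT t))).mono fun q hq =>
    abs_accusation_le (Real.sqrt_nonneg _) (fun i => abs_g1T_le ht.1 (hq i))
      (fun i => abs_g0T_le ht.1 (hq i)) _ _)
  simp only [Set.ofPred_forall]
  exact .iInter fun i => measurable_pi_apply i measurableSet_Icc

section ExtremalStrategy

variable {n m : ℕ} {C : Finset (Fin n)} {j : Fin n} {p : Fin m → ℝ}

lemma codeKernel_apply (p : Fin m → ℝ) :
    codeKernel n m p = rowsMeasure (fun i => bernKernel (p i)) (Fin n) := rfl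

lemma integral_accusation_extremal (hj : j ∉ C) (hp : ∀ i, p i ∈ Set.Ioo 0 1) :
    ∫ x, accusation m g1T g0T p (x j) (fun i => C.sup fun k => x k i) ∂codeKernel n m p = 0 := by
  simp_rw [codeKernel_apply, ← extremalStrategy_restrict]
  refine integral_accusation_of_notMem hj _ fun i => ?_
  rw [bernKernel_apply (Set.Ioo_subset_Icc_self (hp i)), integral_tardosScore_bern (hp i)]

lemma integral_accusation_extremal_sq (hj : j ∉ C) (hp : ∀ i, p i ∈ Set.Ioo 0 1) :
    ∫ x, accusation m g1T g0T p (x j) (fun i => C.sup fun k => x k i) ^ 2 ∂codeKernel n m p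
      = ∑ i, (1 - (1 - p i) ^ C.card) := by
  have hbern : ∀ i, bernKernel (p i) = bern (p i) :=
    fun i => bernKernel_apply (Set.Ioo_subset_Icc_self (hp i))
  simp_rw [codeKernel_apply, ← extremalStrategy_restrict]
  rw [integral_accusation_sq_of_notMem hj _
    (fun i => by rw [hbern, integral_tardosScore_bern (hp i)])
    (fun i => by rw [hbern, integral_tardosScore_sq_bern (hp i)])]
  simp_rw [extremalStrategy_restrict, integral_ite_sup_eq_one_sub_pow, hbern,
    bern_real_false (Set.Ioo_subset_Icc_self (hp _))]

end ExtremalStrategy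

theorem innocent_moments_extremal_strategy_general
    (n m : ℕ)
    (t : ℝ) (ht : t ∈ Set.Ioo (0:ℝ) (1/2))
    (C : Finset (Fin n))
    (j : Fin n) (hj : j ∉ C) :
    (∫ q, accusation m g1T g0T q.1 (q.2 j) (fun i => C.sup fun j' => q.2 j' i)
        ∂(codeMeasure n m (fT t))) = 0
    ∧ variance
        (fun q : (Fin m → ℝ) × (Fin n → Fin m → Bool) =>
          accusation m g1T g0T q.1 (q.2 j) (fun i => C.sup fun j' => q.2 j' i))
        (codeMeasure n m (fT t))
      = (m : ℝ) * (1 - (1 / (π - 4 * tprime t)) *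
          ∫ p in Set.Icc t (1-t), p ^ (-(1/2) : ℝ) * (1-p) ^ ((C.card : ℝ) - 1/2)) := by
  have := isProbabilityMeasure_biasMeasure_fT ht
  set μ := Measure.pi fun _ : Fin m => biasMeasure (fT t)
  set S := fun q : (Fin m → ℝ) × (Fin n → Fin m → Bool) =>
    accusation m g1T g0T q.1 (q.2 j) (fun i => C.sup fun j' => q.2 j' i)
  have hbias : ∀ᵐ r ∂biasMeasure (fT t), r ∈ Set.Ioo 0 1 :=
    (ae_mem_Icc_biasMeasure_fT t).mono fun r hr => Icc_subset_Ioo_zero_one ht hr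
  have hIoo : ∀ᵐ p ∂μ, ∀ i, p i ∈ Set.Ioo 0 1 := ae_pi_forall_of_ae hbias
  have hS : MemLp S 2 (μ ⊗ₘ codeKernel n m) := 
    memLp_accusation_compProd ht j fun x i => C.sup fun j' => x j' i
  rw [codeMeasure_eq_compProd n m (hbias.mono fun _ hr => Set.Ioo_subset_Icc_self hr)]
  have hmean : ∫ q, S q ∂μ ⊗ₘ codeKernel n m = 0 := by
    rw [Measure.integral_compProd (hS.integrable one_le_two), integral_congr_ae
      (hIoo.mono fun p hp => integral_accusation_extremal hj hp), integral_zero]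
  refine ⟨hmean, ?_⟩
  rw [variance_eq_sub hS, hmean]
  simp only [Pi.pow_apply]
  rw [Measure.integral_compProd hS.integrable_sq, integral_congr_ae
      (hIoo.mono fun p hp => integral_accusation_extremal_sq hj hp)]
  rw [integral_sum_one_sub_one_sub_pow_biasMeasure_fT ht, one_div]
  ring

/-- in the code-generation model with Tardos' functions, if the coalition
`C` (of size `c ≥ 1`) uses the extremal strategy `y_i = 1 ⟺ Σ_{j∈C} X_{ji} ≥ 1`
(here `y i = C.sup (fun j => X j i)`), then for every user `j ∉ C`:
`E[S_j] = 0` and `Var S_j = m·(1 - (1/(π-4t'))·∫_t^{1-t} p^{-1/2}(1-p)^{c-1/2} dp)`. -/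
theorem innocent_moments_extremal_strategy
    (n m : ℕ) (hn : 1 ≤ n) (hm : 1 ≤ m)
    (t : ℝ) (ht : t ∈ Set.Ioo (0:ℝ) (1/2))
    (C : Finset (Fin n)) (hC : 1 ≤ C.card)
    (j : Fin n) (hj : j ∉ C) :
    (∫ q, accusation m g1T g0T q.1 (q.2 j) (fun i => C.sup fun j' => q.2 j' i)
        ∂(codeMeasure n m (fT t))) = 0
    ∧ variance
        (fun q : (Fin m → ℝ) × (Fin n → Fin m → Bool) =>
          accusation m g1T g0T q.1 (q.2 j) (fun i => C.sup fun j' => q.2 j' i))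
        (codeMeasure n m (fT t))
      = (m : ℝ) * (1 - (1 / (π - 4 * tprime t)) *
          ∫ p in Set.Icc t (1-t), p ^ (-(1/2) : ℝ) * (1-p) ^ ((C.card : ℝ) - 1/2)) :=
  innocent_moments_extremal_strategy_general n m t ht C j hj

end
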